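/- arXiv:2509.10932 — 3 statements merged into one kernel-verified Lean document; each statement's English description precedes it below -/
import Mathlib

section
/- Let M be an (ε, δ(ε))-differentially private mechanism and let Uniform denote sampling m elements without replacement from a dataset of n points. Then the subsampled mechanism M' = M ∘ Uniform satisfies (ε', δ'(ε'))-differential privacy with ε' = log(1 + (m/n)(e^ε − 1)) and δ'(ε') ≤ (m/n) · δ(ε). -/
open MeasureTheory
open scoped ENNReal

/-- Neighboring multisets: one is obtained from the other by replacing a single element. -/
def NeighborMultiset {X : Type*} (A B : Multiset X) : Prop :=
  ∃ (a b : X) (R : Multiset X), A = a ::ₘ R ∧ B = b ::ₘ R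

/-- Neighboring datasets of size `n`: they differ in a single coordinate (replacement). -/
def NeighborFun {X : Type*} {n : ℕ} (d d' : Fin n → X) : Prop :=
  ∃ i : Fin n, ∀ j, j ≠ i → d j = d' j

/-- `(ε, δ)`-differential privacy. -/
def IsDP {D O : Type*} [MeasurableSpace O] (neighbor : D → D → Prop)
    (M : D → Measure O) (ε δ : ℝ) : Prop :=
  ∀ d d', neighbor d d' → ∀ S : Set O, MeasurableSet S →
    M d S ≤ ENNReal.ofReal (Real.exp ε) * M d' S + ENNReal.ofReal δ

/-- The subsampled mechanism `M ∘ Uniform`: choose a uniformly random subset of `m`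
of the `n` data points (without replacement) and run `M` on it. -/
noncomputable def subsampled {X O : Type*} [MeasurableSpace O] (n m : ℕ)
    (M : Multiset X → Measure O) (d : Fin n → X) : Measure O :=
  ((n.choose m : ℝ≥0∞))⁻¹ •
    ∑ s ∈ Finset.powersetCard m (Finset.univ : Finset (Fin n)), M (s.val.map d)

/-! Split the `m`-subsets according to whether they contain the index `i` at which `d` and `d'`
differ; those avoiding `i` see the same data under `d` and `d'`. A subset `s ∋ i` read through `d`
is a neighbour of `s` read through `d'`, and also of each `insert j (s.erase i)`, `j ∉ s`, read
through `d'`; these pairs `(s, j)` cover every `m`-subset avoiding `i` exactly `m` times. A positive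
combination of the two averaged DP inequalities gives
`n · ∑ₛ M(d|ₛ)(S) ≤ (n + m (e^ε - 1)) · ∑ₛ M(d'|ₛ)(S) + m · C(n, m) · δ`, which is the claim. -/

open Finset

section PowersetCard

variable {α : Type*} [Fintype α] [DecidableEq α]

theorem sum_filter_mem_sum_compl_exchange {β : Type*} [AddCommMonoid β] (m : ℕ) (i : α)
    (v : Finset α → β) :
    ∑ s ∈ (powersetCard m univ).filter (i ∈ ·), ∑ j ∈ sᶜ, v (insert j (s.erase i)) =
      ∑ t ∈ (powersetCard m univ).filter (i ∉ ·), ∑ _j ∈ t, v t := by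
  rw [sum_sigma', sum_sigma']
  refine sum_nbij' (fun p => ⟨insert p.2 (p.1.erase i), p.2⟩)
    (fun p => ⟨insert i (p.1.erase p.2), p.2⟩) ?_ ?_ ?_ ?_ (fun _ _ => rfl)
  · rintro ⟨s, j⟩ hp
    simp only [mem_sigma, mem_filter, mem_powersetCard_univ, mem_compl] at hp ⊢
    obtain ⟨⟨rfl, his⟩, hjs⟩ := hp
    have hje : j ∉ s.erase i := fun h => hjs (mem_of_mem_erase h)
    refine ⟨⟨?_, ?_⟩, mem_insert_self _ _⟩
    · rw [card_insert_of_notMem hje, card_erase_add_one his]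
    · grind
  · rintro ⟨t, j⟩ hp
    simp only [mem_sigma, mem_filter, mem_powersetCard_univ, mem_compl] at hp ⊢
    obtain ⟨⟨rfl, hit⟩, hjt⟩ := hp
    have hie : i ∉ t.erase j := fun h => hit (mem_of_mem_erase h)
    refine ⟨⟨?_, mem_insert_self _ _⟩, ?_⟩
    · rw [card_insert_of_notMem hie, card_erase_add_one hjt]
    · grind
  · rintro ⟨s, j⟩ hp
    simp only [mem_sigma, mem_filter, mem_compl] at hp
    have hje : j ∉ s.erase i := fun h => hp.2 (mem_of_mem_erase h)
    simp only [erase_insert hje, insert_erase hp.1.2]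
  · rintro ⟨t, j⟩ hp
    simp only [mem_sigma, mem_filter] at hp
    have hie : i ∉ t.erase j := fun h => hp.1.2 (mem_of_mem_erase h)
    simp only [erase_insert hie, insert_erase hp.2]

theorem card_filter_mem_powersetCard_mul {m : ℕ} (hm : m ≤ Fintype.card α) (i : α) :
    #((powersetCard m univ).filter (i ∈ ·)) * Fintype.card α = m * (Fintype.card α).choose m := by
  have hex := sum_filter_mem_sum_compl_exchange m i (fun _ => 1)
  simp only [sum_const, smul_eq_mul, mul_one] at hex
  rw [sum_congr rfl (g := fun _ => Fintype.card α - m) (fun s hs => by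
      rw [card_compl, mem_powersetCard_univ.mp (mem_filter.mp hs).1]),
    sum_congr rfl (g := fun _ => m) (fun t ht => mem_powersetCard_univ.mp (mem_filter.mp ht).1),
    sum_const, sum_const, smul_eq_mul, smul_eq_mul] at hex
  have hsplit := card_filter_add_card_filter_not (s := powersetCard m univ) (i ∈ ·)
  rw [card_powersetCard, card_univ] at hsplit
  rw [← hsplit, mul_comm m, add_mul, ← hex, ← mul_add, Nat.add_sub_cancel' hm]

section DoubleCounting

variable {m : ℕ} (i : α) {F G : Finset α → ℝ} {c δ : ℝ}
  (hF_le : ∀ s, i ∈ s → ∀ j ∉ s.erase i, F s ≤ c * G (insert j (s.erase i)) + δ)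
include hF_le

theorem sum_filter_mem_sub_le :
    ∑ s ∈ (powersetCard m univ).filter (i ∈ ·), (F s - δ) ≤
      c * ∑ s ∈ (powersetCard m univ).filter (i ∈ ·), G s := by
  rw [mul_sum]
  refine sum_le_sum fun s hs => ?_
  have := hF_le s (mem_filter.mp hs).2 i (notMem_erase i s)
  rw [insert_erase (mem_filter.mp hs).2] at this
  linarith

theorem card_sub_mul_sum_filter_mem_sub_le (hm : m ≤ Fintype.card α) :
    (Fintype.card α - m) * ∑ s ∈ (powersetCard m univ).filter (i ∈ ·), (F s - δ) ≤
      c * m * ∑ t ∈ (powersetCard m univ).filter (i ∉ ·), G t := calc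
  _ = ∑ s ∈ (powersetCard m univ).filter (i ∈ ·), ∑ _j ∈ sᶜ, (F s - δ) := by
      rw [mul_sum]
      refine sum_congr rfl fun s hs => ?_
      rw [sum_const, card_compl, mem_powersetCard_univ.mp (mem_filter.mp hs).1, nsmul_eq_mul,
        Nat.cast_sub hm]
  _ ≤ ∑ s ∈ (powersetCard m univ).filter (i ∈ ·), ∑ j ∈ sᶜ, c * G (insert j (s.erase i)) := by
      refine sum_le_sum fun s hs => sum_le_sum fun j hj => ?_
      have := hF_le s (mem_filter.mp hs).2 j fun h => mem_compl.mp hj (mem_of_mem_erase h)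
      linarith
  _ = ∑ t ∈ (powersetCard m univ).filter (i ∉ ·), ∑ _j ∈ t, c * G t :=
      sum_filter_mem_sum_compl_exchange m i fun t => c * G t
  _ = _ := by
      rw [mul_sum]
      refine sum_congr rfl fun t ht => ?_
      rw [sum_const, mem_powersetCard_univ.mp (mem_filter.mp ht).1, nsmul_eq_mul]
      ring

theorem sum_powersetCard_div_choose_le (hm : m ≤ Fintype.card α) (hc : 1 ≤ c)
    (hF_eq : ∀ t, i ∉ t → F t = G t) :
    (∑ s ∈ powersetCard m univ, F s) / (Fintype.card α).choose m ≤
      (1 + m / Fintype.card α * (c - 1)) *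
        ((∑ s ∈ powersetCard m univ, G s) / (Fintype.card α).choose m) +
      m / Fintype.card α * δ := by
  set n := Fintype.card α
  set B := ∑ s ∈ (powersetCard m univ).filter (i ∈ ·), (F s - δ)
  set B' := ∑ s ∈ (powersetCard m univ).filter (i ∈ ·), G s
  set A := ∑ t ∈ (powersetCard m univ).filter (i ∉ ·), G t
  have hsplit : ∑ s ∈ powersetCard m univ, F s =
      B + #((powersetCard m univ).filter (i ∈ ·)) * δ + A := by
    rw [← sum_filter_add_sum_filter_not _ (i ∈ ·),
      sum_congr rfl fun t ht => hF_eq t (mem_filter.mp ht).2]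
    simp only [B, sum_sub_distrib, sum_const, nsmul_eq_mul]
    ring
  have hsplit' : ∑ s ∈ powersetCard m univ, G s = B' + A :=
    (sum_filter_add_sum_filter_not _ (i ∈ ·) G).symm
  have hcount : (#((powersetCard m univ).filter (i ∈ ·)) : ℝ) * n = m * n.choose m := by
    exact_mod_cast card_filter_mem_powersetCard_mul hm i
  have hn : (0 : ℝ) < n := by exact_mod_cast Fintype.card_pos_iff.mpr ⟨i⟩
  have hC : (0 : ℝ) < n.choose m := by exact_mod_cast Nat.choose_pos hm
  -- the weights `c - 1` and `n - m + m c` are chosen so that the `B`-terms add up to `c n B`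
  have hcomb : n * (B + A) ≤ (n + m * (c - 1)) * (B' + A) := by
    refine le_of_mul_le_mul_left ?_ (one_pos.trans_le hc)
    have h1 := mul_le_mul_of_nonneg_left (card_sub_mul_sum_filter_mem_sub_le i hF_le hm)
      (sub_nonneg.2 hc)
    have h2 := mul_le_mul_of_nonneg_left (sum_filter_mem_sub_le (m := m) i hF_le)
      (by nlinarith : (0 : ℝ) ≤ n - m + m * c)
    linear_combination h1 + h2
  rw [hsplit, hsplit']
  field_simp
  linear_combination hcomb + δ * hcount

end DoubleCounting

end PowersetCard

theorem neighborMultiset_map_insert_erase {α X : Type*} [DecidableEq α] {d d' : α → X} {i : α}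
    (hdd' : ∀ j, j ≠ i → d j = d' j) {s : Finset α} (his : i ∈ s) {j : α} (hj : j ∉ s.erase i) :
    NeighborMultiset (s.val.map d) ((insert j (s.erase i)).val.map d') := by
  refine ⟨d i, d' j, (s.erase i).val.map d, ?_, ?_⟩
  · conv_lhs => rw [← insert_erase his]
    rw [insert_val_of_notMem (notMem_erase i s), Multiset.map_cons]
  · rw [insert_val_of_notMem hj, Multiset.map_cons,
      Multiset.map_congr rfl fun k hk => (hdd' k (ne_of_mem_erase hk)).symm]

theorem ENNReal.le_ofReal_mul_add_ofReal_iff {x y : ℝ≥0∞} (hx : x ≠ ⊤) (hy : y ≠ ⊤) {a b : ℝ}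
    (ha : 0 ≤ a) (hb : 0 ≤ b) :
    x ≤ ENNReal.ofReal a * y + ENNReal.ofReal b ↔ x.toReal ≤ a * y.toReal + b := by
  rw [← ENNReal.ofReal_toReal hy, ← ENNReal.ofReal_mul ha, ← ENNReal.ofReal_add (by positivity) hb,
    ENNReal.le_ofReal_iff_toReal_le hx (by positivity), ENNReal.toReal_ofReal ENNReal.toReal_nonneg]

theorem isDP_iff_toReal {D O : Type*} [MeasurableSpace O] {neighbor : D → D → Prop}
    {M : D → Measure O} [∀ d, IsFiniteMeasure (M d)] {ε δ : ℝ} (hδ : 0 ≤ δ) :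
    IsDP neighbor M ε δ ↔ ∀ d d', neighbor d d' → ∀ S : Set O, MeasurableSet S →
      (M d S).toReal ≤ Real.exp ε * (M d' S).toReal + δ := by
  simp only [IsDP, ENNReal.le_ofReal_mul_add_ofReal_iff (measure_ne_top _ _) (measure_ne_top _ _)
    (Real.exp_nonneg ε) hδ]

theorem subsampled_apply_toReal {X O : Type*} [MeasurableSpace O] (n m : ℕ)
    (M : Multiset X → Measure O) [∀ A, IsFiniteMeasure (M A)] (d : Fin n → X) (S : Set O) :
    (subsampled n m M d S).toReal =
      (∑ s ∈ powersetCard m univ, (M (s.val.map d) S).toReal) / n.choose m := by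
  simp [subsampled, Measure.finsetSum_apply, ENNReal.toReal_sum, div_eq_inv_mul]

theorem isProbabilityMeasure_subsampled {X O : Type*} [MeasurableSpace O] {n m : ℕ} (hm : m ≤ n)
    (M : Multiset X → Measure O) [∀ A, IsProbabilityMeasure (M A)] (d : Fin n → X) :
    IsProbabilityMeasure (subsampled n m M d) := by
  constructor
  simp only [subsampled, Measure.smul_apply, Measure.finsetSum_apply, measure_univ, sum_const,
    card_powersetCard, card_univ, Fintype.card_fin, nsmul_eq_mul, mul_one, smul_eq_mul]
  exact ENNReal.inv_mul_cancel (by exact_mod_cast (Nat.choose_pos hm).ne') (ENNReal.natCast_ne_top _)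

theorem subsampling_amplification_general {X O : Type*} [MeasurableSpace O]
    (n m : ℕ) (hm : m ≤ n)
    (M : Multiset X → Measure O) [∀ A, IsProbabilityMeasure (M A)]
    (ε δ : ℝ) (hε : 0 ≤ ε) (hδ : 0 ≤ δ)
    (hM : IsDP NeighborMultiset M ε δ) :
    IsDP (NeighborFun (n := n))
      (subsampled n m M)
      (Real.log (1 + (m / n : ℝ) * (Real.exp ε - 1)))
      ((m / n : ℝ) * δ) := by
  have := isProbabilityMeasure_subsampled hm M
  have hM' := (isDP_iff_toReal hδ).mp hM
  rw [isDP_iff_toReal (by positivity)]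
  rintro d d' ⟨i, hdd'⟩ S hS
  have hpos : 0 < 1 + (m / n : ℝ) * (Real.exp ε - 1) :=
    add_pos_of_pos_of_nonneg one_pos (mul_nonneg (by positivity) (sub_nonneg.2 (Real.one_le_exp hε)))
  rw [subsampled_apply_toReal, subsampled_apply_toReal, Real.exp_log hpos]
  have hF_le (s : Finset (Fin n)) (his : i ∈ s) (j : Fin n) (hj : j ∉ s.erase i) :
      (M (s.val.map d) S).toReal ≤
        Real.exp ε * (M ((insert j (s.erase i)).val.map d') S).toReal + δ :=
    hM' _ _ (neighborMultiset_map_insert_erase hdd' his hj) S hS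
  have hF_eq (t : Finset (Fin n)) (hit : i ∉ t) : M (t.val.map d) S = M (t.val.map d') S := by
    rw [Multiset.map_congr rfl fun k hk => hdd' k (ne_of_mem_of_not_mem hk hit)]
  simpa using sum_powersetCard_div_choose_le i hF_le (by simpa using hm) (Real.one_le_exp hε)
    fun t hit => congrArg ENNReal.toReal (hF_eq t hit)

/-- Privacy amplification by subsampling without replacement (Balle et al. 2018):
if `M` is `(ε, δ)`-DP on datasets of size `m` (replace-one neighboring), then the
subsampled mechanism `M' = M ∘ Uniform` is `(ε', (m/n)·δ)`-DP on datasets of size `n`,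
where `ε' = log(1 + (m/n)(e^ε − 1))`. -/
theorem subsampling_amplification {X O : Type*} [MeasurableSpace O]
    (n m : ℕ) (hm : m ≤ n) (hn : 0 < n)
    (M : Multiset X → Measure O) [∀ A, IsProbabilityMeasure (M A)]
    (ε δ : ℝ) (hε : 0 ≤ ε) (hδ : 0 ≤ δ)
    (hM : IsDP NeighborMultiset M ε δ) :
    IsDP (NeighborFun (n := n))
      (subsampled n m M)
      (Real.log (1 + (m / n : ℝ) * (Real.exp ε - 1)))
      ((m / n : ℝ) * δ) :=
  subsampling_amplification_general n m hm M ε δ hε hδ hM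
end

section
/- If mechanisms M_1, …, M_k each satisfy (α, ε_i)-Rényi differential privacy (where M_i may depend on the outputs of M_1, …, M_{i−1}), then their adaptive composition satisfies (α, Σ_{i=1}^k ε_i)-Rényi differential privacy. -/
open scoped ENNReal

/-- Rényi divergence of order `α` between two discrete distributions. -/
noncomputable def renyiDiv {O : Type*} (α : ℝ) (P Q : PMF O) : EReal :=
  (((α - 1)⁻¹ : ℝ) : EReal) * ENNReal.log (∑' x, P x ^ α * Q x ^ (1 - α))

/-- Adaptive composition of the first `k` mechanisms: mechanism `i` may depend on the
list of previous outputs; the composition outputs the list `(y₁, …, y_k)`. -/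
noncomputable def adaptiveComp {D O : Type*} (M : ℕ → D → List O → PMF O) (d : D) :
    ℕ → PMF (List O)
  | 0 => PMF.pure []
  | n + 1 => (adaptiveComp M d n).bind fun ys => (M n d ys).map fun y => ys ++ [y]

/-- From an RDP bound, a bound on the Rényi "moment" sum. -/
lemma renyi_sum_le_exp {O : Type*} {α : ℝ} (hα : 1 < α) {P Q : PMF O} {e : ℝ}
    (h : renyiDiv α P Q ≤ (e : EReal)) :
    (∑' x, P x ^ α * Q x ^ (1 - α)) ≤ EReal.exp (((α - 1) * e : ℝ) : EReal) := by
  have hpos : (0 : ℝ) < (α - 1)⁻¹ := inv_pos.mpr (by linarith)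
  rw [← ENNReal.exp_log (∑' x, P x ^ α * Q x ^ (1 - α)), EReal.exp_le_exp_iff]
  unfold renyiDiv at h
  set L := ENNReal.log (∑' x, P x ^ α * Q x ^ (1 - α)) with hL
  clear_value L
  induction L using EReal.rec with
  | bot => exact bot_le
  | coe r =>
    rw [show (((α - 1)⁻¹ : ℝ) : EReal) * (r : EReal) = (((α - 1)⁻¹ * r : ℝ) : EReal) from
      (EReal.coe_mul _ _).symm, EReal.coe_le_coe_iff] at h
    rw [EReal.coe_le_coe_iff]
    have h1 : (0 : ℝ) < α - 1 := by linarith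
    calc r = (α - 1) * ((α - 1)⁻¹ * r) := by field_simp
      _ ≤ (α - 1) * e := by nlinarith
  | top =>
    rw [EReal.coe_mul_top_of_pos hpos] at h
    exact absurd h (not_le.mpr (EReal.coe_lt_top e))

/-- From a bound on the Rényi "moment" sum, the RDP bound. -/
lemma renyi_exp_le {α : ℝ} (hα : 1 < α) {T : ℝ≥0∞} {e : ℝ}
    (h : T ≤ EReal.exp (((α - 1) * e : ℝ) : EReal)) :
    (((α - 1)⁻¹ : ℝ) : EReal) * ENNReal.log T ≤ (e : EReal) := by
  have hpos : (0 : ℝ) < (α - 1)⁻¹ := inv_pos.mpr (by linarith)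
  have hlog : ENNReal.log T ≤ (((α - 1) * e : ℝ) : EReal) := by
    have := ENNReal.log_monotone h
    rwa [EReal.log_exp] at this
  set L := ENNReal.log T with hL
  clear_value L
  induction L using EReal.rec with
  | bot => rw [EReal.coe_mul_bot_of_pos hpos]; exact bot_le
  | coe r =>
    rw [EReal.coe_le_coe_iff] at hlog
    rw [show (((α - 1)⁻¹ : ℝ) : EReal) * (r : EReal) = (((α - 1)⁻¹ * r : ℝ) : EReal) from
      (EReal.coe_mul _ _).symm, EReal.coe_le_coe_iff]
    have h1 : (0 : ℝ) < α - 1 := by linarith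
    calc (α - 1)⁻¹ * r ≤ (α - 1)⁻¹ * ((α - 1) * e) := by nlinarith
      _ = e := by field_simp
  | top => exact absurd hlog (EReal.coe_lt_top _).not_ge

lemma snoc_inj {O : Type*} {ys zs : List O} {y z : O} (h : ys ++ [y] = zs ++ [z]) :
    ys = zs ∧ y = z := by
  obtain ⟨h1, h2⟩ := List.append_inj' h rfl
  simp_all

lemma snoc_injective {O : Type*} :
    Function.Injective (fun p : List O × O => p.1 ++ [p.2]) := by
  rintro ⟨ys, y⟩ ⟨zs, z⟩ h
  obtain ⟨h1, h2⟩ := snoc_inj h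
  simp_all

lemma adaptiveComp_succ_apply {D O : Type*} (M : ℕ → D → List O → PMF O) (d : D) (n : ℕ)
    (ys : List O) (y : O) :
    adaptiveComp M d (n + 1) (ys ++ [y]) = adaptiveComp M d n ys * M n d ys y := by
  simp only [adaptiveComp, PMF.bind_apply, PMF.map_apply]
  rw [tsum_eq_single ys ?_]
  · congr 1
    rw [tsum_eq_single y ?_]
    · simp
    · intro y' hy'
      rw [if_neg]
      intro hcon
      exact hy' (snoc_inj hcon.symm).2
  · intro a ha
    rw [mul_eq_zero]; right
    rw [ENNReal.tsum_eq_zero]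
    intro y'
    rw [if_neg]
    intro hcon
    exact ha (snoc_inj hcon.symm).1

lemma adaptiveComp_succ_apply_ne {D O : Type*} (M : ℕ → D → List O → PMF O) (d : D) (n : ℕ)
    {z : List O} (hz : ∀ ys y, z ≠ ys ++ [y]) : adaptiveComp M d (n + 1) z = 0 := by
  simp only [adaptiveComp, PMF.bind_apply, PMF.map_apply]
  rw [ENNReal.tsum_eq_zero]
  intro a
  rw [mul_eq_zero]; right
  rw [ENNReal.tsum_eq_zero]
  intro y
  rw [if_neg (hz a y)]

/-- Adaptive composition of RDP mechanisms: if each `Mᵢ` (possibly depending on the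
outputs of `M₁, …, M_{i−1}`) is `(α, εᵢ)`-RDP, then the adaptive composition of
`M₁, …, M_k` is `(α, ∑ᵢ εᵢ)`-RDP. -/
theorem RDP_adaptive_composition {D O : Type*} (neighbor : D → D → Prop)
    (M : ℕ → D → List O → PMF O) (k : ℕ) (α : ℝ) (hα : 1 < α) (ε : ℕ → ℝ)
    (hM : ∀ i < k, ∀ (ys : List O) (d d' : D), neighbor d d' →
      renyiDiv α (M i d ys) (M i d' ys) ≤ (ε i : EReal)) :
    ∀ d d', neighbor d d' →
      renyiDiv α (adaptiveComp M d k) (adaptiveComp M d' k) ≤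
        ((∑ i ∈ Finset.range k, ε i : ℝ) : EReal) := by
  intro d d' hnb
  have hα0 : (0 : ℝ) < α := by linarith
  have key : ∀ n, n ≤ k →
      (∑' z, adaptiveComp M d n z ^ α * adaptiveComp M d' n z ^ (1 - α)) ≤
        EReal.exp (((α - 1) * ∑ i ∈ Finset.range n, ε i : ℝ) : EReal) := by
    intro n
    induction n with
    | zero =>
      intro _
      have : (∑' z, adaptiveComp M d 0 z ^ α * adaptiveComp M d' 0 z ^ (1 - α)) = 1 := by
        simp only [adaptiveComp]
        rw [tsum_eq_single ([] : List O) ?_]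
        · simp [PMF.pure_apply, ENNReal.one_rpow]
        · intro z hz
          rw [PMF.pure_apply, if_neg hz, ENNReal.zero_rpow_of_pos hα0, zero_mul]
      rw [this]
      simp
    | succ n ih =>
      intro hnk
      have ihn := ih (le_of_lt (Nat.lt_of_succ_le hnk))
      set P := adaptiveComp M d n with hP
      set Q := adaptiveComp M d' n with hQ
      have hinner : ∀ ys : List O,
          (∑' y, M n d ys y ^ α * M n d' ys y ^ (1 - α)) ≤
            EReal.exp (((α - 1) * ε n : ℝ) : EReal) :=
        fun ys => renyi_sum_le_exp hα (hM n (Nat.lt_of_succ_le hnk) ys d d' hnb)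
      have expand :
          (∑' z, adaptiveComp M d (n + 1) z ^ α * adaptiveComp M d' (n + 1) z ^ (1 - α)) =
          ∑' ys, P ys ^ α * Q ys ^ (1 - α) *
            (∑' y, M n d ys y ^ α * M n d' ys y ^ (1 - α)) := by
        rw [← Function.Injective.tsum_eq (f := fun z =>
            adaptiveComp M d (n + 1) z ^ α * adaptiveComp M d' (n + 1) z ^ (1 - α))
            (g := fun p : List O × O => p.1 ++ [p.2]) snoc_injective ?_]
        · rw [ENNReal.tsum_prod']
          congr 1; funext ys
          rw [← ENNReal.tsum_mul_left]
          congr 1; funext y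
          rw [adaptiveComp_succ_apply, adaptiveComp_succ_apply,
            ENNReal.mul_rpow_of_ne_top (PMF.apply_ne_top _ _) (PMF.apply_ne_top _ _),
            ENNReal.mul_rpow_of_ne_top (PMF.apply_ne_top _ _) (PMF.apply_ne_top _ _)]
          ring
        · intro z hz
          by_contra hzr
          apply hz
          have hzform : ∀ ys y, z ≠ ys ++ [y] := by
            intro ys y hcon
            exact hzr ⟨(ys, y), hcon.symm⟩
          simp only [adaptiveComp_succ_apply_ne M d n hzform,
            ENNReal.zero_rpow_of_pos hα0, zero_mul]
      rw [expand]
      calc ∑' ys, P ys ^ α * Q ys ^ (1 - α) *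
            (∑' y, M n d ys y ^ α * M n d' ys y ^ (1 - α))
          ≤ ∑' ys, P ys ^ α * Q ys ^ (1 - α) * EReal.exp (((α - 1) * ε n : ℝ) : EReal) :=
            ENNReal.tsum_le_tsum fun ys => mul_le_mul_right (hinner ys) _
        _ = (∑' ys, P ys ^ α * Q ys ^ (1 - α)) * EReal.exp (((α - 1) * ε n : ℝ) : EReal) :=
            ENNReal.tsum_mul_right
        _ ≤ EReal.exp (((α - 1) * ∑ i ∈ Finset.range n, ε i : ℝ) : EReal) *
              EReal.exp (((α - 1) * ε n : ℝ) : EReal) := mul_le_mul_left ihn _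
        _ = EReal.exp (((α - 1) * ∑ i ∈ Finset.range (n + 1), ε i : ℝ) : EReal) := by
            rw [← EReal.exp_add, ← EReal.coe_add]
            congr 1
            rw [EReal.coe_eq_coe_iff, Finset.sum_range_succ]
            ring
  exact renyi_exp_le hα (key k le_rfl)
end

section
/- For all ε > 0 and α > 1, the quantity (1/(α−1)) · log( (sinh(αε) − sinh((α−1)ε)) / sinh(ε) ) is at most ε, i.e., the RDP parameter of an ε-DP mechanism of any order α never exceeds ε. -/
/-!
With `a = (α - 1) ε`, the numerator is `sinh (a + ε) - sinh a`, and
`sinh (a + b) - sinh a = sinh a (cosh b - 1) + cosh a sinh b ≤ (sinh a + cosh a) sinh b = exp a sinh b`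
because `cosh b - sinh b = exp (-b) ≤ 1`. Hence the argument of the logarithm is at most `exp a`.
-/

open Real

theorem Real.sinh_add_sub_sinh_le_exp_mul_sinh {a b : ℝ} (ha : 0 ≤ a) (hb : 0 ≤ b) :
    sinh (a + b) - sinh a ≤ exp a * sinh b := by
  have hcosh : cosh b - 1 ≤ sinh b := by
    have hdiff := cosh_sub_sinh b
    have hexp : exp (-b) ≤ 1 := exp_le_one_iff.2 (neg_nonpos.2 hb)
    linarith
  have hsinh : 0 ≤ sinh a := sinh_nonneg_iff.2 ha
  calc sinh (a + b) - sinh a = sinh a * (cosh b - 1) + cosh a * sinh b := by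
        rw [sinh_add]; ring
    _ ≤ sinh a * sinh b + cosh a * sinh b := by gcongr
    _ = exp a * sinh b := by rw [← cosh_add_sinh]; ring

/-- For all `ε > 0` and `α > 1`, the tight RDP parameter of a pure `ε`-DP mechanism,
`(1/(α−1)) log((sinh(αε) − sinh((α−1)ε))/sinh(ε))`, never exceeds `ε`. -/
theorem rdp_parameter_le_eps (ε α : ℝ) (hε : 0 < ε) (hα : 1 < α) :
    (α - 1)⁻¹ *
      Real.log ((Real.sinh (α * ε) - Real.sinh ((α - 1) * ε)) / Real.sinh ε) ≤ ε := by
  have hsinh : 0 < sinh ε := sinh_pos_iff.2 hε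
  have hnum : 0 < sinh (α * ε) - sinh ((α - 1) * ε) :=
    sub_pos.2 (sinh_lt_sinh.2 (by linarith))
  have hsplit : α * ε = (α - 1) * ε + ε := by ring
  rw [inv_mul_le_iff₀ (sub_pos.2 hα), log_le_iff_le_exp (div_pos hnum hsinh),
    div_le_iff₀ hsinh, hsplit]
  exact sinh_add_sub_sinh_le_exp_mul_sinh (by nlinarith) hε.le
end
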